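/- arXiv:1501.05328 — 4 statements merged into one kernel-verified Lean document; each statement's English description precedes it below -/
import Mathlib

section
/- If a language L (the set of finite subwords of a bi-infinite sequence space) is finitely balanced for the letter a_i — i.e., there is a constant C such that for all n, M_i(n) - m_i(n) < C, where m_i(n) and M_i(n) are the minimum and maximum number of occurrences of a_i in words of length n in L — then the letter a_i has a well-defined frequency: there exists f_i ∈ ℝ such that for all n, n·f_i - C ≤ m_i(n) ≤ M_i(n) ≤ n·f_i + C. -/
/-!
The least number `m n` of occurrences of `a` in a word of length `n` is superadditive and the
largest number `M n` is subadditive, because a word of length `p + q` in a factorial language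
splits into factors of lengths `p` and `q`. Hence `n * m k ≤ m (n * k) ≤ M (n * k) ≤ k * M n`,
so every ratio `m k / k` lies below every ratio `M n / n`, and any `f` between them satisfies
`m n ≤ n * f ≤ M n`. Since `M n - m n < C`, this gives both bounds.
-/

namespace Nat

theorem mul_le_of_superadditive {u : ℕ → ℕ} (hu : ∀ p q, u p + u q ≤ u (p + q)) (n k : ℕ) :
    n * u k ≤ u (n * k) := by
  induction n with
  | zero => simp
  | succ n ih =>
    have h := hu (n * k) k
    rw [Nat.succ_mul, Nat.succ_mul]
    omega

theorem le_mul_of_subadditive {u : ℕ → ℕ} (hu : ∀ p q, u (p + q) ≤ u p + u q) {k : ℕ}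
    (hk : 1 ≤ k) (n : ℕ) : u (k * n) ≤ k * u n := by
  induction k, hk using Nat.le_induction with
  | base => simp
  | succ k _ ih =>
    have h := hu (k * n) n
    rw [Nat.succ_mul, Nat.succ_mul]
    omega

theorem eq_zero_of_superadditive {u : ℕ → ℕ} (hu : ∀ p q, u p + u q ≤ u (p + q)) : u 0 = 0 := by
  have := hu 0 0
  rw [Nat.add_zero] at this
  omega

end Nat

theorem exists_mul_between_of_superadditive_of_subadditive {m M : ℕ → ℕ}
    (hm : ∀ p q, m p + m q ≤ m (p + q)) (hM : ∀ p q, M (p + q) ≤ M p + M q)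
    (hmM : ∀ n, m n ≤ M n) :
    ∃ f : ℝ, ∀ n : ℕ, (m n : ℝ) ≤ n * f ∧ n * f ≤ M n := by
  have hratio : ∀ n k : ℕ, (m (k + 1) : ℝ) / (k + 1) ≤ (M (n + 1) : ℝ) / (n + 1) := by
    intro n k
    rw [div_le_div_iff₀ (by positivity) (by positivity)]
    have key : (n + 1) * m (k + 1) ≤ (k + 1) * M (n + 1) :=
      calc (n + 1) * m (k + 1) ≤ m ((n + 1) * (k + 1)) := Nat.mul_le_of_superadditive hm _ _
        _ ≤ M ((k + 1) * (n + 1)) := Nat.mul_comm (n + 1) (k + 1) ▸ hmM _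
        _ ≤ (k + 1) * M (n + 1) := Nat.le_mul_of_subadditive hM (Nat.le_add_left 1 k) _
    exact_mod_cast (mul_comm _ _).trans_le (key.trans_eq (mul_comm _ _))
  have hbdd : BddAbove (Set.range fun k : ℕ => (m (k + 1) : ℝ) / (k + 1)) :=
    ⟨_, Set.forall_mem_range.mpr (hratio 0)⟩
  refine ⟨⨆ k : ℕ, (m (k + 1) : ℝ) / (k + 1), fun n => ?_⟩
  rcases n with _ | n
  · simp [Nat.eq_zero_of_superadditive hm]
  have hpos : (0 : ℝ) < n + 1 := by positivity
  push_cast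
  constructor
  · rw [mul_comm, ← div_le_iff₀ hpos]
    exact le_ciSup hbdd n
  · rw [mul_comm, ← le_div_iff₀ hpos]
    exact ciSup_le (hratio n)

section Language

variable {A : Type*} {L : Set (List A)}

theorem exists_append_of_factorial (hfac : ∀ u v : List A, u ++ v ∈ L → u ∈ L ∧ v ∈ L)
    {w : List A} (hw : w ∈ L) {p q : ℕ} (hl : w.length = p + q) :
    ∃ u ∈ L, ∃ v ∈ L, u.length = p ∧ v.length = q ∧ w = u ++ v := by
  have hsplit := List.take_append_drop p w
  obtain ⟨hu, hv⟩ := hfac _ _ (hsplit ▸ hw)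
  exact ⟨_, hu, _, hv, by simp [hl], by simp [hl], hsplit.symm⟩

variable [DecidableEq A] (hfac : ∀ u v : List A, u ++ v ∈ L → u ∈ L ∧ v ∈ L) (a : A)
include hfac

theorem minCount_superadditive {m : ℕ → ℕ}
    (hm_le : ∀ n, ∀ w ∈ L, w.length = n → m n ≤ w.count a)
    (hm_att : ∀ n, ∃ w ∈ L, w.length = n ∧ w.count a = m n) (p q : ℕ) :
    m p + m q ≤ m (p + q) := by
  obtain ⟨w, hw, hl, hc⟩ := hm_att (p + q)
  obtain ⟨u, hu, v, hv, rfl, rfl, rfl⟩ := exists_append_of_factorial hfac hw hl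
  rw [← hc, List.count_append]
  exact Nat.add_le_add (hm_le _ u hu rfl) (hm_le _ v hv rfl)

theorem maxCount_subadditive {M : ℕ → ℕ}
    (hM_ge : ∀ n, ∀ w ∈ L, w.length = n → w.count a ≤ M n)
    (hM_att : ∀ n, ∃ w ∈ L, w.length = n ∧ w.count a = M n) (p q : ℕ) :
    M (p + q) ≤ M p + M q := by
  obtain ⟨w, hw, hl, hc⟩ := hM_att (p + q)
  obtain ⟨u, hu, v, hv, rfl, rfl, rfl⟩ := exists_append_of_factorial hfac hw hl
  rw [← hc, List.count_append]
  exact Nat.add_le_add (hM_ge _ u hu rfl) (hM_ge _ v hv rfl)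

end Language

theorem stmt0_general {A : Type*} [DecidableEq A] (L : Set (List A))
    (hfac : ∀ u v : List A, u ++ v ∈ L → u ∈ L ∧ v ∈ L)
    (a : A) (m M : ℕ → ℕ)
    (hm_le : ∀ n, ∀ w ∈ L, w.length = n → m n ≤ w.count a)
    (hm_att : ∀ n, ∃ w ∈ L, w.length = n ∧ w.count a = m n)
    (hM_ge : ∀ n, ∀ w ∈ L, w.length = n → w.count a ≤ M n)
    (hM_att : ∀ n, ∃ w ∈ L, w.length = n ∧ w.count a = M n)
    (C : ℝ) (hC : ∀ n : ℕ, (M n : ℝ) - (m n : ℝ) < C) :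
    ∃ f : ℝ, ∀ n : ℕ,
      (n : ℝ) * f - C ≤ (m n : ℝ) ∧ (m n : ℝ) ≤ (M n : ℝ) ∧ (M n : ℝ) ≤ (n : ℝ) * f + C := by
  have hmM : ∀ n, m n ≤ M n := fun n => by
    obtain ⟨w, hw, hl, hc⟩ := hm_att n
    exact hc ▸ hM_ge n w hw hl
  obtain ⟨f, hf⟩ := exists_mul_between_of_superadditive_of_subadditive
    (minCount_superadditive hfac a hm_le hm_att) (maxCount_subadditive hfac a hM_ge hM_att) hmM
  refine ⟨f, fun n => ⟨?_, by exact_mod_cast hmM n, ?_⟩⟩ <;>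
    linarith [hf n, hC n]

/-- If the language of a subshift is finitely balanced for the letter `a`
(there is `C` with `M a n - m a n < C` for all `n`), then the letter `a`
has a well-defined frequency `f` with `n*f - C ≤ m n ≤ M n ≤ n*f + C`. -/
theorem stmt0 {A : Type*} [Fintype A] [DecidableEq A] (L : Set (List A))
    (hfac : ∀ u v : List A, u ++ v ∈ L → u ∈ L ∧ v ∈ L)
    (hext : ∀ w ∈ L, ∃ x y : A, ([x] ++ w ++ [y]) ∈ L)
    (hne : ∀ n : ℕ, ∃ w ∈ L, w.length = n)
    (a : A) (m M : ℕ → ℕ)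
    (hm_le : ∀ n, ∀ w ∈ L, w.length = n → m n ≤ w.count a)
    (hm_att : ∀ n, ∃ w ∈ L, w.length = n ∧ w.count a = m n)
    (hM_ge : ∀ n, ∀ w ∈ L, w.length = n → w.count a ≤ M n)
    (hM_att : ∀ n, ∃ w ∈ L, w.length = n ∧ w.count a = M n)
    (C : ℝ) (hC : ∀ n : ℕ, (M n : ℝ) - (m n : ℝ) < C) :
    ∃ f : ℝ, ∀ n : ℕ,
      (n : ℝ) * f - C ≤ (m n : ℝ) ∧ (m n : ℝ) ≤ (M n : ℝ) ∧ (M n : ℝ) ≤ (n : ℝ) * f + C :=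
  stmt0_general L hfac a m M hm_le hm_att hM_ge hM_att C hC
end

section
/- The Thue–Morse language is not totally finitely balanced: there is a word w of length 2 (e.g. w = aa) such that M_w(n) - m_w(n) is unbounded in n, where M_w(n) and m_w(n) are the maximum and minimum number of occurrences of w as a factor among length-n words of the Thue–Morse language. Specifically, for each m the word φ^{2m}(a)·φ^{2m-2}(b)·φ^{2m-4}(a)·⋯ of length 4^m + 4^{m-1} + ⋯ + 1 has a number of occurrences of aa and bb differing from the expected density by an amount growing linearly in m. -/
/-- The Thue–Morse sequence over `Bool` (`false` is the letter `a`). -/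
def tmSeq (n : ℕ) : Bool := ((Nat.digits 2 n).count 1) % 2 == 1

/-- `w` is a factor of the Thue–Morse sequence. -/
def IsTMFactor (w : List Bool) : Prop :=
  ∃ i : ℕ, w = (List.range w.length).map (fun k => tmSeq (i + k))

/-- Number of (possibly overlapping) occurrences of the word `w` in `v`. -/
def occCount (w v : List Bool) : ℕ :=
  ((List.range v.length).filter (fun i => (v.drop i).take w.length = w)).length

/-!
Write `w_m = φ^{2m}(a) φ^{2m-2}(b) φ^{2m-4}(a) ⋯`, a prefix of `φ^{2m+1}(a)` of length `N`.
Counting across the concatenation boundaries gives `3 (|w_m|_aa + |w_m|_bb) + m + 1 = N`, and for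
even `m` the word `w_m` has as many `aa` as `bb`, hence `6 |w_m|_aa = N - m - 1`. Conversely, if
every factor of length `N` had at most `B` occurrences of `aa`, cutting the prefix `φ^{2K}(a)`,
which has `(4^K - 4) / 6` of them, into pieces of length `N` would force `N ≤ 6 B + 6` as
`K → ∞`. For even `m ≥ 6 C + 6` this rules out `B = |w_m|_aa + C`.
-/

lemma occCount_cons (w : List Bool) (c : Bool) (l : List Bool) :
    occCount w (c :: l) = occCount w l + if (c :: l).take w.length = w then 1 else 0 := by
  unfold occCount
  rw [List.length_cons, List.range_succ_eq_map, List.filter_cons, List.filter_map]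
  split_ifs with h <;> simp_all [Function.comp_def, add_comm]

lemma occCount_map_of_injective {f : Bool → Bool} (hf : Function.Injective f) (w v : List Bool) :
    occCount (w.map f) (v.map f) = occCount w v := by
  unfold occCount
  simp [← List.map_drop, ← List.map_take, (List.map_injective_iff.2 hf).eq_iff]

lemma take_two_cons_eq_pair_iff {α : Type*} {x y c : α} {l : List α} :
    (c :: l).take 2 = [x, y] ↔ c = x ∧ l.head? = some y := by
  cases l <;> simp

lemma occCount_pair_cons (x y c : Bool) (l : List Bool) :
    occCount [x, y] (c :: l) =
      occCount [x, y] l + if c = x ∧ l.head? = some y then 1 else 0 := by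
  simp only [occCount_cons, List.length_cons, List.length_nil, Nat.reduceAdd,
    take_two_cons_eq_pair_iff]

lemma occCount_pair_append (x y : Bool) (u v : List Bool) :
    occCount [x, y] (u ++ v) = occCount [x, y] u + occCount [x, y] v +
      if u.getLast? = some x ∧ v.head? = some y then 1 else 0 := by
  induction u with
  | nil => simp [occCount]
  | cons c u ih =>
    rw [List.cons_append, occCount_pair_cons, ih, occCount_pair_cons]
    cases u with
    | nil => simp [occCount]
    | cons d u =>
      simp only [List.cons_append, List.head?_cons, List.getLast?_cons_cons, Option.some.injEq]
      omega

lemma occCount_pair_map_not (x y : Bool) (v : List Bool) :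
    occCount [x, y] (v.map not) = occCount [!x, !y] v := by
  simpa using occCount_map_of_injective (f := not) (fun a b h => by simpa using h) [!x, !y] v

lemma occCount_le_length (w v : List Bool) : occCount w v ≤ v.length :=
  (List.length_filter_le _ _).trans_eq List.length_range

lemma occCount_pair_append_le (x y : Bool) (u v : List Bool) :
    occCount [x, y] (u ++ v) ≤ occCount [x, y] u + occCount [x, y] v + 1 := by
  rw [occCount_pair_append]
  split <;> omega

def seqWindow {α : Type*} (f : ℕ → α) (i n : ℕ) : List α :=
  (List.range n).map (fun k => f (i + k))

section seqWindow

variable {α : Type*} (f : ℕ → α)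

@[simp]
lemma length_seqWindow (i n : ℕ) : (seqWindow f i n).length = n := by
  simp [seqWindow]

lemma seqWindow_add (i m n : ℕ) :
    seqWindow f i (m + n) = seqWindow f i m ++ seqWindow f (i + m) n := by
  simp only [seqWindow, List.range_add, List.map_append, List.map_map]
  congr 1
  exact List.map_congr_left fun k _ => by simp [Nat.add_assoc]

lemma eq_seqWindow_zero_of_prefix {w : List α} {n : ℕ} (h : w <+: seqWindow f 0 n) :
    w = seqWindow f 0 w.length := by
  have hle : w.length ≤ n := by simpa using h.length_le
  rw [List.prefix_iff_eq_take.mp h, seqWindow, ← List.map_take, List.take_range,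
    min_eq_left hle]
  simp [seqWindow]

end seqWindow

lemma isTMFactor_seqWindow (i n : ℕ) : IsTMFactor (seqWindow tmSeq i n) :=
  ⟨i, by rw [length_seqWindow]; rfl⟩

lemma occCount_pair_seqWindow_mul_le (f : ℕ → Bool) (x y : Bool) {N B : ℕ}
    (hB : ∀ i, occCount [x, y] (seqWindow f i N) ≤ B) (q s : ℕ) :
    occCount [x, y] (seqWindow f s (q * N)) ≤ q * (B + 1) := by
  induction q generalizing s with
  | zero => simp [occCount, seqWindow]
  | succ q ih =>
    rw [Nat.succ_mul q N, Nat.succ_mul q (B + 1), seqWindow_add]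
    have hsplit :=
      occCount_pair_append_le x y (seqWindow f s (q * N)) (seqWindow f (s + q * N) N)
    have hinit := ih s
    have hlast := hB (s + q * N)
    omega

lemma tmSeq_two_mul (n : ℕ) : tmSeq (2 * n) = tmSeq n := by
  rcases Nat.eq_zero_or_pos n with rfl | hn
  · rfl
  · simp [tmSeq, Nat.digits_def' one_lt_two (by omega : 0 < 2 * n)]

lemma tmSeq_two_mul_add_one (n : ℕ) : tmSeq (2 * n + 1) = !tmSeq n := by
  rw [tmSeq, tmSeq, Nat.digits_def' one_lt_two (by omega), show (2 * n + 1) % 2 = 1 by omega,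
    show (2 * n + 1) / 2 = n by omega, List.count_cons_self]
  rcases Nat.mod_two_eq_zero_or_one ((Nat.digits 2 n).count 1) with h | h <;>
    simp [Nat.add_mod, h]

lemma tmSeq_two_pow_add {k n : ℕ} (hn : n < 2 ^ k) : tmSeq (2 ^ k + n) = !tmSeq n := by
  induction k generalizing n with
  | zero =>
    obtain rfl : n = 0 := by simpa using hn
    rfl
  | succ k ih =>
    obtain ⟨a, rfl | rfl⟩ := Nat.even_or_odd' n
    · rw [pow_succ, mul_comm, ← mul_add, tmSeq_two_mul, tmSeq_two_mul, ih (by omega)]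
    · rw [pow_succ, mul_comm, ← add_assoc, ← mul_add, tmSeq_two_mul_add_one,
        tmSeq_two_mul_add_one, ih (by omega)]

/-- `tmBlock k = φ^k(a)`. -/
def tmBlock : ℕ → List Bool
  | 0 => [false]
  | k + 1 => tmBlock k ++ (tmBlock k).map not

lemma tmBlock_eq_seqWindow (k : ℕ) : tmBlock k = seqWindow tmSeq 0 (2 ^ k) := by
  induction k with
  | zero => rfl
  | succ k ih =>
    rw [tmBlock, pow_succ, mul_two, seqWindow_add, ← ih, zero_add]
    congr 1
    simp only [ih, seqWindow, List.map_map, Function.comp_def, zero_add]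
    exact List.map_congr_left fun i hi => (tmSeq_two_pow_add (by simpa using hi)).symm

lemma length_tmBlock (k : ℕ) : (tmBlock k).length = 2 ^ k := by
  simp [tmBlock_eq_seqWindow]

lemma tmBlock_head? (k : ℕ) : (tmBlock k).head? = some false := by
  induction k with
  | zero => rfl
  | succ k ih => simp [tmBlock, List.head?_append, ih]

lemma tmBlock_getLast? (k : ℕ) : (tmBlock k).getLast? = some (k % 2 == 1) := by
  induction k with
  | zero => rfl
  | succ k ih =>
    rw [tmBlock, List.getLast?_append, List.getLast?_map, ih]
    rcases Nat.mod_two_eq_zero_or_one k with h | h <;> simp [Nat.add_mod, h]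

lemma occCount_aa_tmBlock_succ (k : ℕ) :
    occCount [false, false] (tmBlock (k + 1)) =
      occCount [false, false] (tmBlock k) + occCount [true, true] (tmBlock k) := by
  simp [tmBlock, occCount_pair_append, occCount_pair_map_not, tmBlock_head?]

lemma occCount_bb_tmBlock_succ (k : ℕ) :
    occCount [true, true] (tmBlock (k + 1)) =
      occCount [false, false] (tmBlock k) + occCount [true, true] (tmBlock k) + k % 2 := by
  rcases Nat.mod_two_eq_zero_or_one k with h | h <;>
    simp [tmBlock, occCount_pair_append, occCount_pair_map_not, tmBlock_head?,
      tmBlock_getLast?, h, add_comm]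

lemma occCount_aa_add_bb_tmBlock (k : ℕ) :
    3 * (occCount [false, false] (tmBlock k) + occCount [true, true] (tmBlock k)) + 1 + k % 2 =
      2 ^ k := by
  induction k with
  | zero => rfl
  | succ k ih =>
    rw [occCount_aa_tmBlock_succ, occCount_bb_tmBlock_succ, pow_succ]
    omega

lemma occCount_tmBlock_two_mul_add_two (K : ℕ) :
    6 * occCount [false, false] (tmBlock (2 * K + 2)) + 4 = 2 ^ (2 * K + 2) ∧
      occCount [true, true] (tmBlock (2 * K + 2)) =
        occCount [false, false] (tmBlock (2 * K + 2)) + 1 := by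
  have := occCount_aa_add_bb_tmBlock (2 * K + 1)
  rw [occCount_aa_tmBlock_succ (2 * K + 1), occCount_bb_tmBlock_succ (2 * K + 1), pow_succ]
  omega

/-- `tmUnbalanced m = φ^{2m}(a) φ^{2m-2}(b) φ^{2m-4}(a) ⋯ φ^0(a or b)`. -/
def tmUnbalanced : ℕ → List Bool
  | 0 => [false]
  | m + 1 => tmBlock (2 * m + 2) ++ (tmUnbalanced m).map not

lemma tmUnbalanced_head? (m : ℕ) : (tmUnbalanced m).head? = some false := by
  cases m <;> simp [tmUnbalanced, List.head?_append, tmBlock_head?]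

lemma occCount_tmUnbalanced (m : ℕ) :
    occCount [true, true] (tmUnbalanced m) = occCount [false, false] (tmUnbalanced m) + m % 2 ∧
      3 * (occCount [false, false] (tmUnbalanced m) + occCount [true, true] (tmUnbalanced m))
        + m + 1 = (tmUnbalanced m).length := by
  induction m with
  | zero => exact ⟨rfl, rfl⟩
  | succ m ih =>
    have hlast : (tmBlock (2 * m + 2)).getLast? = some false := by
      simp [tmBlock_getLast?]
    obtain ⟨haa, hbb⟩ := occCount_tmBlock_two_mul_add_two m
    simp only [tmUnbalanced, occCount_pair_append, occCount_pair_map_not, hlast, List.head?_map,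
      tmUnbalanced_head?, List.length_append, List.length_map, length_tmBlock, Option.map_some,
      Option.some.injEq, Bool.not_true, Bool.not_false, Bool.false_eq_true, Bool.true_eq_false,
      and_true, and_false, ↓reduceIte, add_zero]
    omega

lemma tmUnbalanced_prefix (m : ℕ) : tmUnbalanced m <+: tmBlock (2 * m + 1) := by
  induction m with
  | zero => exact ⟨[true], rfl⟩
  | succ m ih =>
    rw [tmUnbalanced, tmBlock]
    exact (List.prefix_append_right_inj _).2 ((ih.trans ⟨_, rfl⟩).map not)

lemma isTMFactor_tmUnbalanced (m : ℕ) : IsTMFactor (tmUnbalanced m) := by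
  have h := tmUnbalanced_prefix m
  rw [tmBlock_eq_seqWindow] at h
  rw [eq_seqWindow_zero_of_prefix tmSeq h]
  exact isTMFactor_seqWindow 0 _

lemma length_le_of_forall_occCount_aa_seqWindow_le {N B : ℕ}
    (hB : ∀ i, occCount [false, false] (seqWindow tmSeq i N) ≤ B) : N ≤ 6 * B + 6 := by
  by_contra! hN
  -- a prefix long enough to be cut into more than `5 N + 5` pieces of length `N`
  obtain ⟨hprefix, -⟩ := occCount_tmBlock_two_mul_add_two (5 * N ^ 2 + 6 * N)
  rw [tmBlock_eq_seqWindow] at hprefix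
  have hlarge : 5 * N ^ 2 + 6 * N < 2 ^ (2 * (5 * N ^ 2 + 6 * N) + 2) :=
    Nat.lt_two_pow_self.trans_le (Nat.pow_le_pow_right two_pos (by omega))
  generalize 2 ^ (2 * (5 * N ^ 2 + 6 * N) + 2) = T at hprefix hlarge
  have hT : T / N * N + T % N = T := Nat.div_add_mod' T N
  have hr : T % N < N := Nat.mod_lt _ (by omega)
  generalize T / N = q, T % N = r at hT hr
  subst hT
  rw [seqWindow_add] at hprefix
  have hsplit := occCount_pair_append_le false false (seqWindow tmSeq 0 (q * N))
    (seqWindow tmSeq (0 + q * N) r)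
  have htiles := occCount_pair_seqWindow_mul_le tmSeq false false hB q 0
  have hrest := occCount_le_length [false, false] (seqWindow tmSeq (0 + q * N) r)
  rw [length_seqWindow] at hrest
  have hqN : q * (6 * B + 7) ≤ q * N := Nat.mul_le_mul_left q hN
  have hq : q ≤ 5 * N + 5 := by nlinarith
  have : q * N ≤ (5 * N + 5) * N := Nat.mul_le_mul_right N hq
  nlinarith

/-- The Thue–Morse language is not totally finitely balanced: for the
two-letter word `aa` (here `[false, false]`), the difference `M_w(n) - m_w(n)`
between the maximal and minimal number of occurrences of `w` in length-`n`
factors is unbounded in `n`. -/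
theorem stmt6 :
    ¬ ∃ C : ℕ, ∀ n : ℕ, ∀ v v' : List Bool,
      IsTMFactor v → IsTMFactor v' → v.length = n → v'.length = n →
        occCount [false, false] v ≤ occCount [false, false] v' + C := by
  rintro ⟨C, hC⟩
  obtain ⟨hbb, hlength⟩ := occCount_tmUnbalanced (2 * (3 * C + 3))
  set w := tmUnbalanced (2 * (3 * C + 3))
  have hwindows (i : ℕ) :
      occCount [false, false] (seqWindow tmSeq i w.length) ≤ occCount [false, false] w + C :=
    hC _ _ _ (isTMFactor_seqWindow i _) (isTMFactor_tmUnbalanced _) (length_seqWindow ..) rfl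
  have := length_le_of_forall_occCount_aa_seqWindow_le hwindows
  omega
end

section
/- Conversely, if u : ℤ → A is a bi-infinite sequence, a ∈ A, f ∈ ℝ, and the partial sums α(n) = Σ_{k=0}^{n-1} (𝟙[u_k = a] - f) satisfy |α(n)| ≤ C for all n ∈ ℤ, then every factor of u of length n contains between n·f - 2C and n·f + 2C occurrences of a; in particular, if such a bounded α exists for some f, the counts of a in factors of u are finitely balanced: M_a(n) - m_a(n) ≤ 4C for all n. -/
/-- Conversely, if the partial sums `α(n) = Σ_{k<n} (𝟙[u k = a] - f)` are
bounded by `C`, then every length-`n` factor of `u` contains between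
`n*f - 2C` and `n*f + 2C` occurrences of `a`; in particular any two factors of
the same length have `a`-counts differing by at most `4C`. -/
theorem stmt8 {A : Type*} [Fintype A] [DecidableEq A] (u : ℤ → A) (a : A) (f : ℝ)
    (α : ℤ → ℝ) (hα0 : α 0 = 0)
    (hαrec : ∀ n : ℤ, α (n + 1) = α n + (if u n = a then (1 : ℝ) - f else -f))
    (C : ℝ) (hbd : ∀ n : ℤ, |α n| ≤ C) :
    (∀ (m : ℤ) (n : ℕ),
      (n : ℝ) * f - 2 * C ≤ (((List.range n).filter (fun k => u (m + k) = a)).length : ℝ) ∧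
      (((List.range n).filter (fun k => u (m + k) = a)).length : ℝ) ≤ (n : ℝ) * f + 2 * C) ∧
    (∀ (m m' : ℤ) (n : ℕ),
      (((List.range n).filter (fun k => u (m + k) = a)).length : ℝ) ≤
        (((List.range n).filter (fun k => u (m' + k) = a)).length : ℝ) + 4 * C) := by
  have key : ∀ (n : ℕ) (m : ℤ),
      α (m + n) = α m + (((List.range n).filter (fun k => u (m + k) = a)).length : ℝ)
        - (n : ℝ) * f := by
    intro n
    induction n with
    | zero => intro m; simp
    | succ n ih =>
      intro m
      have h1 : (m : ℤ) + (n + 1 : ℕ) = (m + n) + 1 := by push_cast; ring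
      rw [h1, hαrec, ih m]
      by_cases h : u (m + n) = a <;>
        simp [List.range_succ, h] <;> push_cast <;> ring
  have hest : ∀ (m : ℤ) (n : ℕ),
      |(((List.range n).filter (fun k => u (m + k) = a)).length : ℝ) - (n : ℝ) * f| ≤ 2 * C := by
    intro m n
    have h := key n m
    have : (((List.range n).filter (fun k => u (m + k) = a)).length : ℝ) - (n : ℝ) * f
        = α (m + n) - α m := by linarith
    rw [this]
    calc |α (m + n) - α m| ≤ |α (m + n)| + |α m| := abs_sub _ _
      _ ≤ 2 * C := by have := hbd (m + n); have := hbd m; linarith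
  constructor
  · intro m n
    have h := abs_le.mp (hest m n)
    constructor <;> linarith [h.1, h.2]
  · intro m m' n
    have h1 := abs_le.mp (hest m n)
    have h2 := abs_le.mp (hest m' n)
    linarith [h1.2, h2.1]
end

section
/- Let Ξ be a minimal subshift over alphabet A and g : Ξ → ℝ the function g(u) = 𝟙[u_0 = a] - f for a letter a and real f. If the language of Ξ is finitely balanced for a with frequency f (every length-n word has between nf - C and nf + C occurrences of a), then the Birkhoff sums Σ_{k=0}^{n-1} g(σᵏ u) are bounded uniformly in n and u, and hence (by Gottschalk–Hedlund) g is a continuous coboundary: g = h∘σ - h for some continuous h : Ξ → ℝ. -/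
/-!
Gottschalk–Hedlund via the skew product `(x, t) ↦ (T x, t + g x)` on `X × ℝ`. One orbit
with bounded Birkhoff sums yields a nonempty compact invariant set, which contains a minimal
closed invariant set `K`. Vertical translations commute with the skew product, so if two points
of `K` lie in one fibre, `K` would be invariant under a nonzero vertical translation and hence
unbounded. Thus `K` is the graph of a function `h`, continuous because `K` is compact; its
projection is a closed `T`-invariant set, hence everything by minimality of the base, and
invariance of the graph is the coboundary equation `g = h ∘ T - h`.
-/

open Function Set

section MinimalSet

variable {Y : Type*} [TopologicalSpace Y]

def IsMinimalSet (Φ : Y → Y) (K : Set Y) : Prop :=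
  Minimal (fun L : Set Y => L.Nonempty ∧ IsClosed L ∧ MapsTo Φ L L) K

theorem exists_isMinimalSet_subset {Φ : Y → Y} {W : Set Y} (hWc : IsCompact W)
    (hWcl : IsClosed W) (hWne : W.Nonempty) (hΦ : MapsTo Φ W W) :
    ∃ K ⊆ W, IsMinimalSet Φ K := by
  set 𝒮 : Set (Set Y) := {L | L ⊆ W ∧ L.Nonempty ∧ IsClosed L ∧ MapsTo Φ L L}
  have hchain : ∀ c ⊆ 𝒮, IsChain (· ⊆ ·) c → c.Nonempty → ∃ lb ∈ 𝒮, ∀ s ∈ c, lb ⊆ s := by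
    intro c hc hch hcne
    obtain ⟨L₀, hL₀⟩ := hcne
    have : Nonempty c := ⟨⟨L₀, hL₀⟩⟩
    refine ⟨⋂₀ c, ⟨(sInter_subset_of_mem hL₀).trans (hc hL₀).1, ?_, ?_, ?_⟩,
      fun L hL => sInter_subset_of_mem hL⟩
    · refine IsCompact.nonempty_sInter_of_directed_nonempty_isCompact_isClosed
        (fun L hL M hM => (hch.total hL hM).elim (fun h => ⟨L, hL, subset_rfl, h⟩)
          (fun h => ⟨M, hM, h, subset_rfl⟩))
        (fun L hL => (hc hL).2.1) (fun L hL => hWc.of_isClosed_subset (hc hL).2.2.1 (hc hL).1)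
        (fun L hL => (hc hL).2.2.1)
    · exact isClosed_sInter fun L hL => (hc hL).2.2.1
    · exact fun p hp => mem_sInter.2 fun L hL => (hc hL).2.2.2 (hp L hL)
  obtain ⟨K, hKW, hK⟩ := zorn_superset_nonempty 𝒮 hchain W ⟨subset_rfl, hWne, hWcl, hΦ⟩
  exact ⟨K, hKW, hK.prop.2, fun L hL hLK => hK.2 ⟨hLK.trans hKW, hL⟩ hLK⟩

namespace IsMinimalSet

variable {Φ : Y → Y} {K : Set Y}

theorem image_eq [T2Space Y] (hK : IsMinimalSet Φ K) (hKc : IsCompact K)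
    (hΦ : ContinuousOn Φ K) : Φ '' K = K := by
  have hsub : Φ '' K ⊆ K := hK.prop.2.2.image_subset
  refine hsub.antisymm (hK.2 ⟨hK.prop.1.image Φ, (hKc.image_of_continuousOn hΦ).isClosed, ?_⟩
    hsub)
  exact (mapsTo_image Φ K).mono_left hsub

theorem mapsTo_of_commute (hK : IsMinimalSet Φ K) {Ψ : Y → Y} (hΨ : Continuous Ψ)
    (hcomm : Function.Commute Ψ Φ) {p : Y} (hp : p ∈ K) (hΨp : Ψ p ∈ K) : MapsTo Ψ K K := by
  have hK' : K ∩ Ψ ⁻¹' K ∈ {L : Set Y | L.Nonempty ∧ IsClosed L ∧ MapsTo Φ L L} := by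
    refine ⟨⟨p, hp, hΨp⟩, hK.prop.2.1.inter (hK.prop.2.1.preimage hΨ), ?_⟩
    intro q ⟨hq, hΨq⟩
    exact ⟨hK.prop.2.2 hq, by simpa only [mem_preimage, hcomm q] using hK.prop.2.2 hΨq⟩
  exact fun q hq => (hK.2 hK' inter_subset_left hq).2

end IsMinimalSet

end MinimalSet

theorem continuousOn_of_isCompact_graph {X Z : Type*} [TopologicalSpace X] [T2Space X]
    [TopologicalSpace Z] {K : Set (X × Z)} (hK : IsCompact K) {h : X → Z}
    (hgraph : ∀ p ∈ K, h p.1 = p.2) : ContinuousOn h (Prod.fst '' K) := by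
  refine continuousOn_iff_isClosed.2 fun F hF => ⟨Prod.fst '' (K ∩ Prod.snd ⁻¹' F),
    ((hK.inter_right (hF.preimage continuous_snd)).image continuous_fst).isClosed, ?_⟩
  ext x
  constructor
  · rintro ⟨hx, p, hp, rfl⟩
    exact ⟨⟨p, ⟨hp, by rwa [mem_preimage, ← hgraph p hp]⟩, rfl⟩, p, hp, rfl⟩
  · rintro ⟨⟨p, ⟨hp, hpF⟩, rfl⟩, hx⟩
    exact ⟨by rwa [mem_preimage, hgraph p hp], hx⟩

section SkewProduct

variable {X : Type*}

def skewProduct (T : X → X) (g : X → ℝ) (p : X × ℝ) : X × ℝ := (T p.1, p.2 + g p.1)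

variable {T : X → X} {g : X → ℝ}

theorem continuous_skewProduct [TopologicalSpace X] (hT : Continuous T) (hg : Continuous g) :
    Continuous (skewProduct T g) :=
  (hT.comp continuous_fst).prodMk (continuous_snd.add (hg.comp continuous_fst))

theorem commute_map_add_skewProduct (T : X → X) (g : X → ℝ) (c : ℝ) :
    Function.Commute (Prod.map id (· + c)) (skewProduct T g) := fun _ =>
  Prod.ext rfl (add_right_comm _ _ _)

theorem IsMinimalSet.snd_eq_of_fst_eq [TopologicalSpace X] {K : Set (X × ℝ)}
    (hK : IsMinimalSet (skewProduct T g) K) (hKc : IsCompact K) {p q : X × ℝ} (hp : p ∈ K)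
    (hq : q ∈ K) (hpq : p.1 = q.1) : p.2 = q.2 := by
  by_contra hne
  set c := p.2 - q.2
  have hc : c ≠ 0 := sub_ne_zero.2 hne
  have hmaps : MapsTo (Prod.map id (· + c)) K K :=
    hK.mapsTo_of_commute (continuous_id.prodMap (continuous_add_const c))
      (commute_map_add_skewProduct T g c) hq (by simpa [Prod.map, c, ← hpq] using hp)
  have hiter : ∀ n : ℕ, (q.1, q.2 + n * c) ∈ K := fun n => by
    have := hmaps.iterate n hq
    simp only [Prod.map_iterate, iterate_id, add_right_iterate, nsmul_eq_mul] at this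
    exact this
  obtain ⟨r, hr⟩ := (hKc.image continuous_snd).isBounded.subset_closedBall 0
  obtain ⟨n, hn⟩ := exists_nat_gt ((r + |q.2|) / |c|)
  have hbound : |q.2 + n * c| ≤ r := by
    simpa using hr ⟨_, hiter n, rfl⟩
  have hgrow : n * |c| - |q.2| ≤ |q.2 + n * c| := by
    have := abs_sub_abs_le_abs_sub (n * c) (-q.2)
    rw [abs_mul, Nat.abs_cast, abs_neg, sub_neg_eq_add, add_comm] at this
    exact this
  have hn' := (div_lt_iff₀ (abs_pos.2 hc)).1 hn
  linarith

def boundedBirkhoffSet (T : X → X) (g : X → ℝ) (Ξ : Set X) (C : ℝ) : Set (X × ℝ) :=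
  {p | p.1 ∈ Ξ ∧ ∀ n, |p.2 + birkhoffSum T g n p.1| ≤ C}

theorem mapsTo_skewProduct_boundedBirkhoffSet {Ξ : Set X} (hTΞ : MapsTo T Ξ Ξ) (C : ℝ) :
    MapsTo (skewProduct T g) (boundedBirkhoffSet T g Ξ C) (boundedBirkhoffSet T g Ξ C) := by
  rintro ⟨x, t⟩ ⟨hx, hbdd⟩
  refine ⟨hTΞ hx, fun n => ?_⟩
  simpa only [skewProduct, add_assoc, birkhoffSum_succ'] using hbdd (n + 1)

theorem isCompact_boundedBirkhoffSet [TopologicalSpace X] [T2Space X] {Ξ : Set X}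
    (hΞ : IsCompact Ξ) (hT : Continuous T) (hg : Continuous g) (C : ℝ) :
    IsCompact (boundedBirkhoffSet T g Ξ C) := by
  have hcont : ∀ n, Continuous (birkhoffSum T g n) := fun n =>
    continuous_finsetSum _ fun k _ => hg.comp (hT.iterate k)
  have hclosed : IsClosed (boundedBirkhoffSet T g Ξ C) := by
    simp only [boundedBirkhoffSet, ofPred_and, ofPred_forall]
    exact (hΞ.isClosed.preimage continuous_fst).inter <| isClosed_iInter fun n =>
      isClosed_le (continuous_snd.add ((hcont n).comp continuous_fst)).abs continuous_const
  refine (hΞ.prod (isCompact_Icc (a := -C) (b := C))).of_isClosed_subset hclosed ?_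
  rintro p ⟨hp, hbdd⟩
  exact ⟨hp, abs_le.1 (by simpa using hbdd 0)⟩

theorem exists_continuousOn_coboundary_of_bounded_birkhoffSum [TopologicalSpace X] [T2Space X]
    {Ξ : Set X} (hΞ : IsCompact Ξ) (hT : Continuous T) (hg : Continuous g) (hTΞ : MapsTo T Ξ Ξ)
    (hmin : ∀ P ⊆ Ξ, P.Nonempty → IsClosed P → T '' P = P → P = Ξ)
    {x₀ : X} (hx₀ : x₀ ∈ Ξ) {C : ℝ} (hC : ∀ n, |birkhoffSum T g n x₀| ≤ C) :
    ∃ h : X → ℝ, ContinuousOn h Ξ ∧ ∀ x ∈ Ξ, g x = h (T x) - h x := by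
  obtain ⟨K, hKW, hK⟩ := exists_isMinimalSet_subset (isCompact_boundedBirkhoffSet hΞ hT hg C)
    (isCompact_boundedBirkhoffSet hΞ hT hg C).isClosed ⟨(x₀, 0), hx₀, by simpa using hC⟩
    (mapsTo_skewProduct_boundedBirkhoffSet hTΞ C)
  have hKc : IsCompact K := (isCompact_boundedBirkhoffSet hΞ hT hg C).of_isClosed_subset
    hK.prop.2.1 hKW
  have hKimage : skewProduct T g '' K = K :=
    hK.image_eq hKc (continuous_skewProduct hT hg).continuousOn
  have hproj : Prod.fst '' K = Ξ := by
    refine hmin _ (image_subset_iff.2 fun p hp => (hKW hp).1) (hK.prop.1.image _)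
      (hKc.image continuous_fst).isClosed ?_
    conv_rhs => rw [← hKimage]
    simp only [image_image, skewProduct]
  have : Nonempty X := ⟨x₀⟩
  set h : X → ℝ := fun x => (invFunOn Prod.fst K x).2
  have hgraph : ∀ p ∈ K, h p.1 = p.2 := fun p hp =>
    have hinv := invFunOn_pos (f := Prod.fst) ⟨p, hp, rfl⟩
    hK.snd_eq_of_fst_eq hKc hinv.1 hp hinv.2
  refine ⟨h, hproj ▸ continuousOn_of_isCompact_graph hKc hgraph, ?_⟩
  rintro x hx
  obtain ⟨p, hp, rfl⟩ := hproj.symm ▸ hx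
  have hTp := hgraph _ (hK.prop.2.2 hp)
  simp only [skewProduct] at hTp
  rw [hTp, hgraph p hp]
  ring

end SkewProduct

section Subshift

variable {A : Type*}

def leftShift (u : ℤ → A) : ℤ → A := fun n => u (n + 1)

theorem leftShift_iterate_apply (k : ℕ) (u : ℤ → A) (j : ℤ) :
    leftShift^[k] u j = u (j + k) := by
  induction k generalizing u with
  | zero => simp
  | succ k ih =>
    rw [iterate_succ_apply, ih, leftShift]
    push_cast
    ring_nf

theorem continuous_leftShift [TopologicalSpace A] : Continuous (leftShift (A := A)) :=
  continuous_pi fun n => continuous_apply (n + 1)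

theorem translate_mem_of_leftShift_image_eq {P : Set (ℤ → A)} (hP : leftShift '' P = P)
    {u : ℤ → A} (hu : u ∈ P) (m : ℤ) : (fun k => u (k + m)) ∈ P := by
  induction m using Int.induction_on with
  | zero => simpa using hu
  | succ m ih =>
    rw [← hP]
    exact ⟨_, ih, funext fun k => by simp only [leftShift]; ring_nf⟩
  | pred m ih =>
    rw [← hP] at ih
    obtain ⟨w, hw, hwu⟩ := ih
    convert hw using 1
    funext k
    have hwk := congrFun hwu (k - 1)
    simp only [leftShift, sub_add_cancel] at hwk
    rw [hwk]
    ring_nf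

theorem eq_of_leftShift_image_eq [TopologicalSpace A] {Ξ : Set (ℤ → A)}
    (hmin : ∀ u ∈ Ξ, ∀ v ∈ Ξ, v ∈ closure {w : ℤ → A | ∃ m : ℤ, w = fun k => u (k + m)})
    {P : Set (ℤ → A)} (hPΞ : P ⊆ Ξ) (hPne : P.Nonempty) (hPcl : IsClosed P)
    (hP : leftShift '' P = P) : P = Ξ := by
  obtain ⟨u, hu⟩ := hPne
  refine hPΞ.antisymm fun v hv => closure_minimal ?_ hPcl (hmin u (hPΞ hu) v hv)
  rintro _ ⟨m, rfl⟩
  exact translate_mem_of_leftShift_image_eq hP hu m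

theorem birkhoffSum_leftShift_apply_zero {M : Type*} [AddCommMonoid M] (φ : A → M) (n : ℕ)
    (u : ℤ → A) : birkhoffSum leftShift (fun v => φ (v 0)) n u = ∑ k ∈ Finset.range n, φ (u k) :=
  Finset.sum_congr rfl fun k _ => by simp only [leftShift_iterate_apply, zero_add]

end Subshift

-- `List.range n` is coerced to a `List ℤ` here, exactly as in the balance hypothesis.
theorem length_filter_range_sub_eq_sum (p : ℤ → Prop) [DecidablePred p] (n : ℕ) (f : ℝ) :
    (((List.range n).filter (fun k : ℤ => p k)).length : ℝ) - n * f
      = ∑ k ∈ Finset.range n, ((if p k then 1 else 0) - f) := by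
  rw [Finset.sum_sub_distrib, Finset.sum_boole, Finset.sum_const, Finset.card_range,
    nsmul_eq_mul]
  simp only [List.pure_def, List.bind_eq_flatMap, ← List.map_eq_flatMap, List.filter_map,
    List.length_map]
  rfl

theorem stmt13_general {A : Type*} [Fintype A] [DecidableEq A]
    [TopologicalSpace A] [DiscreteTopology A]
    (Ξ : Set (ℤ → A)) (hne : Ξ.Nonempty) (hclosed : IsClosed Ξ)
    (hshift : ∀ u ∈ Ξ, (fun n => u (n + 1)) ∈ Ξ)
    (hmin : ∀ u ∈ Ξ, ∀ v ∈ Ξ, v ∈ closure {w : ℤ → A | ∃ m : ℤ, w = fun k => u (k + m)})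
    (a : A) (f C : ℝ)
    (hbal : ∀ u ∈ Ξ, ∀ (m : ℤ) (n : ℕ),
      |(((List.range n).filter (fun k => u (m + k) = a)).length : ℝ) - (n : ℝ) * f| ≤ C) :
    (∀ u ∈ Ξ, ∀ n : ℕ,
      |∑ k ∈ Finset.range n, ((if u (k : ℤ) = a then (1 : ℝ) else 0) - f)| ≤ C) ∧
    ∃ h : (ℤ → A) → ℝ, ContinuousOn h Ξ ∧
      ∀ u ∈ Ξ, (if u 0 = a then (1 : ℝ) else 0) - f = h (fun n => u (n + 1)) - h u := by
  have hsum : ∀ u ∈ Ξ, ∀ n : ℕ,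
      |∑ k ∈ Finset.range n, ((if u (k : ℤ) = a then (1 : ℝ) else 0) - f)| ≤ C := by
    intro u hu n
    have hbal₀ := hbal u hu 0 n
    simp only [zero_add] at hbal₀
    rwa [length_filter_range_sub_eq_sum (fun k : ℤ => u k = a)] at hbal₀
  obtain ⟨u₀, hu₀⟩ := hne
  have hg : Continuous fun u : ℤ → A => (if u 0 = a then (1 : ℝ) else 0) - f :=
    ((continuous_of_discreteTopology (f := fun b : A => if b = a then (1 : ℝ) else 0)).comp
      (continuous_apply 0)).sub continuous_const
  have hbirkhoff : ∀ n, |birkhoffSum leftShift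
      (fun u : ℤ → A => (if u 0 = a then (1 : ℝ) else 0) - f) n u₀| ≤ C := fun n => by
    rw [birkhoffSum_leftShift_apply_zero (fun b => (if b = a then (1 : ℝ) else 0) - f)]
    exact hsum u₀ hu₀ n
  exact ⟨hsum, exists_continuousOn_coboundary_of_bounded_birkhoffSum hclosed.isCompact
    continuous_leftShift hg hshift (fun _ => eq_of_leftShift_image_eq hmin) hu₀ hbirkhoff⟩

/-- For a minimal subshift `Ξ` whose language is finitely balanced for the
letter `a` with frequency `f`, the Birkhoff sums of
`g(u) = 𝟙[u 0 = a] - f` along the shift are uniformly bounded, and hence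
(by Gottschalk–Hedlund) `g` is a continuous coboundary on `Ξ`. -/
theorem stmt13 {A : Type*} [Fintype A] [DecidableEq A]
    [TopologicalSpace A] [DiscreteTopology A]
    (Ξ : Set (ℤ → A)) (hne : Ξ.Nonempty) (hclosed : IsClosed Ξ)
    (hshift : ∀ u ∈ Ξ, (fun n => u (n + 1)) ∈ Ξ)
    (hshift' : ∀ u ∈ Ξ, (fun n => u (n - 1)) ∈ Ξ)
    (hmin : ∀ u ∈ Ξ, ∀ v ∈ Ξ, v ∈ closure {w : ℤ → A | ∃ m : ℤ, w = fun k => u (k + m)})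
    (a : A) (f C : ℝ)
    (hbal : ∀ u ∈ Ξ, ∀ (m : ℤ) (n : ℕ),
      |(((List.range n).filter (fun k => u (m + k) = a)).length : ℝ) - (n : ℝ) * f| ≤ C) :
    (∀ u ∈ Ξ, ∀ n : ℕ,
      |∑ k ∈ Finset.range n, ((if u (k : ℤ) = a then (1 : ℝ) else 0) - f)| ≤ C) ∧
    ∃ h : (ℤ → A) → ℝ, ContinuousOn h Ξ ∧
      ∀ u ∈ Ξ, (if u 0 = a then (1 : ℝ) else 0) - f = h (fun n => u (n + 1)) - h u :=
  stmt13_general Ξ hne hclosed hshift hmin a f C hbal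
end
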